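/- Let $\gamma > 0$, $1 < p < 2$, and let $\phi : (0,\infty) \to [0,\infty)$ be a non-decreasing function. Then for every $R > 0$, $\left( \int_0^R \left( \frac{\phi(r)}{r^{\gamma}} \right)^{\frac{1}{p-1}} \frac{dr}{r} \right)^{p-1} \leq c(p,\gamma) \int_0^{2R} \frac{\phi(r)}{r^{\gamma}} \frac{dr}{r}$ for a constant $c(p,\gamma)$ depending only on $p$ and $\gamma$. -/

import Mathlib

/-!
Write `f r = φ r / r ^ γ` and `J = ∫_0^{2R} f dr/r`. Monotonicity of `φ` gives
`f r ≤ 2 ^ γ f s` for `r ≤ s ≤ 2r`, so averaging over the dyadic interval `(r, 2r)` bounds `f`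
on `(0, R)` pointwise by `2 ^ (γ + 1) J`. Splitting `f ^ (1/(p-1)) = f ^ ((2-p)/(p-1)) · f` and
using this bound on the first factor gives the inequality with `c(p, γ) = 2 ^ ((γ + 1)(2 - p))`.
-/

open MeasureTheory ENNReal Set

theorem MonotoneOn.div_rpow_le_two_rpow_mul {φ : ℝ → ℝ} (hφ0 : ∀ r, 0 < r → 0 ≤ φ r)
    (hφ : MonotoneOn φ (Ioi 0)) {γ r s : ℝ} (hγ : 0 ≤ γ) (hr : 0 < r) (hrs : r ≤ s)
    (hs : s ≤ 2 * r) : φ r / r ^ γ ≤ 2 ^ γ * (φ s / s ^ γ) := by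
  have hs0 : 0 < s := hr.trans_le hrs
  calc φ r / r ^ γ = 2 ^ γ * (φ r / (2 * r) ^ γ) := by
        rw [Real.mul_rpow zero_le_two hr.le]
        field_simp
    _ ≤ 2 ^ γ * (φ s / s ^ γ) := by
        gcongr
        · exact hφ0 s hs0
        · exact hφ hr hs0 hrs

/-- On `(r, 2r)` one has `1 / r ≤ 2 / s`, and `(r, 2r)` has Lebesgue measure `r`. -/
theorem ofReal_le_mul_setLIntegral_Ioo_two_mul {g : ℝ → ℝ} {C r : ℝ} (hC : 0 ≤ C)
    (hr : 0 < r) (hg : ∀ s ∈ Ioo r (2 * r), g r ≤ C * g s) :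
    ENNReal.ofReal (g r) ≤ ENNReal.ofReal (2 * C) *
      ∫⁻ s in Ioo r (2 * r), ENNReal.ofReal (g s) * (ENNReal.ofReal s)⁻¹ := by
  have hr' : ENNReal.ofReal r ≠ 0 := by simpa using hr
  calc ENNReal.ofReal (g r)
      = ∫⁻ _ in Ioo r (2 * r), ENNReal.ofReal (g r) * (ENNReal.ofReal r)⁻¹ := by
        rw [setLIntegral_const, Real.volume_Ioo, two_mul, add_sub_cancel_right, mul_assoc,
          ENNReal.inv_mul_cancel hr' ofReal_ne_top, mul_one]
    _ ≤ ∫⁻ s in Ioo r (2 * r),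
          ENNReal.ofReal (2 * C) * (ENNReal.ofReal (g s) * (ENNReal.ofReal s)⁻¹) := by
        refine setLIntegral_mono' measurableSet_Ioo fun s hs => ?_
        have hs0 : 0 < s := hr.trans hs.1
        rw [← div_eq_mul_inv, ← div_eq_mul_inv, ← ENNReal.ofReal_div_of_pos hr,
          ← ENNReal.ofReal_div_of_pos hs0, ← ENNReal.ofReal_mul (by positivity)]
        rcases le_or_gt 0 (g s) with hgs | hgs
        · refine ENNReal.ofReal_le_ofReal ?_
          calc g r / r ≤ C * g s / r := by gcongr; exact hg s hs
            _ ≤ C * g s / (s / 2) := by gcongr; linarith [hs.2]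
            _ = 2 * C * (g s / s) := by field_simp
        · have hgr : g r ≤ 0 := (hg s hs).trans (mul_nonpos_of_nonneg_of_nonpos hC hgs.le)
          rw [ENNReal.ofReal_of_nonpos (div_nonpos_of_nonpos_of_nonneg hgr hr.le)]
          exact zero_le
    _ = _ := lintegral_const_mul' _ _ ofReal_ne_top

/-- The exponent `1 / q ≥ 1` is split as `(1 - q) / q + 1`, and the pointwise bound is spent on
the first part only. -/
theorem setLIntegral_rpow_inv_mul_rpow_le {α : Type*} [MeasurableSpace α] {μ : Measure α}
    {s : Set α} {f w : α → ℝ≥0∞} {a J : ℝ≥0∞} {q : ℝ} (hs : MeasurableSet s) (hq0 : 0 < q)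
    (hq1 : q ≤ 1) (ha : a ≠ ⊤) (hJ : J ≠ ⊤) (hf : ∀ x ∈ s, f x ≤ a * J)
    (hfJ : ∫⁻ x in s, f x * w x ∂μ ≤ J) :
    (∫⁻ x in s, f x ^ (1 / q) * w x ∂μ) ^ q ≤ a ^ (1 - q) * J := by
  have he : 0 ≤ (1 - q) / q := div_nonneg (sub_nonneg.2 hq1) hq0.le
  have hM : (a * J) ^ ((1 - q) / q) ≠ ⊤ := rpow_ne_top_of_nonneg he (mul_ne_top ha hJ)
  calc (∫⁻ x in s, f x ^ (1 / q) * w x ∂μ) ^ q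
      ≤ (∫⁻ x in s, (a * J) ^ ((1 - q) / q) * (f x * w x) ∂μ) ^ q := by
        gcongr ?_ ^ q
        refine setLIntegral_mono' hs fun x hx => ?_
        have hsplit : 1 / q = (1 - q) / q + 1 := by field_simp; ring
        rw [hsplit, rpow_add_of_nonneg _ _ he zero_le_one, rpow_one, mul_assoc]
        gcongr
        exact hf x hx
    _ ≤ ((a * J) ^ ((1 - q) / q) * J) ^ q := by
        rw [lintegral_const_mul' _ _ hM]
        gcongr
    _ = a ^ (1 - q) * J := by
        rw [mul_rpow_of_nonneg _ _ hq0.le, ← rpow_mul, div_mul_cancel₀ _ hq0.ne',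
          mul_rpow_of_nonneg _ _ (sub_nonneg.2 hq1), mul_assoc, ← rpow_add_of_nonneg _ _
          (sub_nonneg.2 hq1) hq0.le, sub_add_cancel, rpow_one]

/-- elementary inequality for non-decreasing `φ` in the sublinear range
`1 < p < 2`. -/
theorem sublinear_elementary_inequality (γ p : ℝ) (hγ : 0 < γ) (hp1 : 1 < p) (hp2 : p < 2) :
    ∃ c : ℝ, 0 < c ∧
      ∀ (φ : ℝ → ℝ), (∀ r, 0 < r → 0 ≤ φ r) → MonotoneOn φ (Set.Ioi (0:ℝ)) →
        ∀ R : ℝ, 0 < R →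
          (∫⁻ r in Set.Ioo (0:ℝ) R,
              (ENNReal.ofReal (φ r / r ^ γ)) ^ (1 / (p - 1)) * (ENNReal.ofReal r)⁻¹)
            ^ (p - 1)
          ≤ ENNReal.ofReal c *
            ∫⁻ r in Set.Ioo (0:ℝ) (2 * R),
              ENNReal.ofReal (φ r / r ^ γ) * (ENNReal.ofReal r)⁻¹ := by
  refine ⟨(2 * 2 ^ γ) ^ (2 - p), by positivity, fun φ hφ0 hφ R hR => ?_⟩
  set J := ∫⁻ r in Ioo (0:ℝ) (2 * R), ENNReal.ofReal (φ r / r ^ γ) * (ENNReal.ofReal r)⁻¹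
  rcases eq_or_ne J ⊤ with hJ | hJ
  · rw [hJ, mul_top (by positivity)]
    exact le_top
  have hbound : ∀ r ∈ Ioo 0 R,
      ENNReal.ofReal (φ r / r ^ γ) ≤ ENNReal.ofReal (2 * 2 ^ γ) * J := by
    rintro r ⟨hr, hrR⟩
    refine (ofReal_le_mul_setLIntegral_Ioo_two_mul (g := fun r => φ r / r ^ γ) (by positivity)
      hr fun s hs => hφ.div_rpow_le_two_rpow_mul hφ0 hγ.le hr hs.1.le hs.2.le).trans ?_
    gcongr
    exact lintegral_mono_set (Ioo_subset_Ioo hr.le (by linarith))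
  calc _ ≤ ENNReal.ofReal (2 * 2 ^ γ) ^ (1 - (p - 1)) * J :=
        setLIntegral_rpow_inv_mul_rpow_le measurableSet_Ioo (by linarith) (by linarith)
          ofReal_ne_top hJ hbound (lintegral_mono_set (Ioo_subset_Ioo_right (by linarith)))
    _ = _ := by
        rw [ENNReal.ofReal_rpow_of_pos (by positivity), sub_sub_eq_add_sub, one_add_one_eq_two]
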